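/- arXiv:2512.12805 — 2 statements merged into one kernel-verified Lean document; each statement's English description precedes it below -/
import Mathlib

section
/- Let (χ, dist, μ) be a metric space with a Borel probability measure. For k = 0, …, K−1 let logit^{(k)}: ℝ^{d_h} × ℝ^{d_h} × ℝ^{d_p} → ℝ be Lipschitz with constant at most L_logit (with respect to the sum of the Euclidean norms of the arguments), let v^{(k)}: ℝ^{d_h} → ℝ^{d_h} be Lipschitz with constant at most L_v with v^{(k)}(0) = 0, and let p: χ × χ → ℝ^{d_p} be bounded measurable and Lipschitz with constant L_p in each argument. Let f: χ → ℝ^{d_h} be bounded and Lipschitz with constant L_f, and define hidden states recursively: h^{(0)} = f and h^{(k+1)}(x) = ∫_χ Att^{(k)}(x,y)·v^{(k)}(h^{(k)}(y)) dμ(y), where Att^{(k)}(x,y) = exp(Logit^{(k)}(x,y)) / ∫_χ exp(Logit^{(k)}(x,z)) dμ(z) and Logit^{(k)}(x,y) = logit^{(k)}(h^{(k)}(x), h^{(k)}(y), p(x,y)). Assume L_v ≥ 1, 4·L_logit·‖f‖_∞ ≥ 1, and that r > 0 satisfies (4^k·L_logit^k·L_v^{k(k+1)/2}·‖f‖_∞^k·(L_f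 + k·L_p) + L_p)·r ≤ 1/(2·L_logit) for every k = 0, …, K−1. Then for every k = 0, …, K−1: LocLip_r(h^{(k)}) ≤ 4^k·L_logit^k·L_v^{k(k+1)/2}·‖f‖_∞^k·(L_f + k·L_p) and ‖h^{(k)}‖_∞ ≤ L_v^k·‖f‖_∞. -/
/-!
Induction on the layer. A layer averages the values `v (h y)` against the softmax weights
`w_x y = exp (logit x y) / ∫ exp (logit x z) dμ`, a probability density, so the sup bound gains
one factor `L_v`. If `dist x x' = d ≤ r`, the logits at `x` and `x'` differ by at most
`δ = L_logit (C_k + L_p) d` uniformly in `y`, hence `w_x ≤ e^{2δ} w_{x'}` and `w_{x'} ≤ e^{2δ} w_x`,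
which gives `|w_x - w_{x'}| ≤ (e^{2δ} - 1) w_{x'} ≤ 4δ w_{x'}` as `2δ ≤ 1`. So the local Lipschitz
constant obeys `C_{k+1} ≤ 4 L_logit (C_k + L_p) L_v^{k+1} ‖f‖_∞`, and the closed form dominates
this recursion because `4 L_logit ‖f‖_∞ ≥ 1` and `L_v ≥ 1`.
-/

open MeasureTheory Function

lemma abs_sub_le_sub_one_mul_of_le_mul {a b s : ℝ} (hs : 1 ≤ s)
    (hab : a ≤ s * b) (hba : b ≤ s * a) : |a - b| ≤ (s - 1) * b := by
  rw [abs_le]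
  constructor
  · nlinarith
  · linarith

lemma integrable_exp_of_le {α : Type*} [MeasurableSpace α] {μ : Measure α} [IsFiniteMeasure μ]
    {f : α → ℝ} {B : ℝ} (hf : AEStronglyMeasurable f μ) (hle : ∀ y, f y ≤ B) :
    Integrable (fun y => Real.exp (f y)) μ := by
  refine (integrable_const (Real.exp B)).mono' (Real.continuous_exp.comp_aestronglyMeasurable hf) ?_
  filter_upwards with y
  rw [Real.norm_eq_abs, abs_of_pos (Real.exp_pos _)]
  exact Real.exp_le_exp.2 (hle y)

section Softmax

variable {α E : Type*} [MeasurableSpace α] {μ : Measure α}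
  [NormedAddCommGroup E] [NormedSpace ℝ E] {ℓ ℓ' : α → ℝ} {u : α → E}

noncomputable def softmaxWeight (μ : Measure α) (ℓ : α → ℝ) (y : α) : ℝ :=
  Real.exp (ℓ y) / ∫ z, Real.exp (ℓ z) ∂μ

noncomputable def softmaxAverage (μ : Measure α) (ℓ : α → ℝ) (u : α → E) : E :=
  ∫ y, softmaxWeight μ ℓ y • u y ∂μ

lemma softmaxWeight_pos [NeZero μ] (hℓ : Integrable (fun y => Real.exp (ℓ y)) μ) (y : α) :
    0 < softmaxWeight μ ℓ y :=
  div_pos (Real.exp_pos _) (integral_exp_pos hℓ)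

lemma integrable_softmaxWeight (hℓ : Integrable (fun y => Real.exp (ℓ y)) μ) :
    Integrable (softmaxWeight μ ℓ) μ :=
  hℓ.div_const _

lemma integral_softmaxWeight [NeZero μ] (hℓ : Integrable (fun y => Real.exp (ℓ y)) μ) :
    ∫ y, softmaxWeight μ ℓ y ∂μ = 1 :=
  (integral_div _ _).trans (div_self (integral_exp_pos hℓ).ne')

-- The numerator and the normalizer each change by a factor at most `exp δ`.
lemma softmaxWeight_le_exp_two_mul_softmaxWeight [NeZero μ]
    (hℓ : Integrable (fun y => Real.exp (ℓ y)) μ) (hℓ' : Integrable (fun y => Real.exp (ℓ' y)) μ)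
    {δ : ℝ} (hδ : ∀ y, |ℓ y - ℓ' y| ≤ δ) (y : α) :
    softmaxWeight μ ℓ y ≤ Real.exp (2 * δ) * softmaxWeight μ ℓ' y := by
  have hexp : ∀ {a b}, |a - b| ≤ δ → Real.exp a ≤ Real.exp δ * Real.exp b := fun h => by
    rw [← Real.exp_add]; exact Real.exp_le_exp.2 (by linarith [(abs_le.1 h).2])
  have hZ : ∫ z, Real.exp (ℓ' z) ∂μ ≤ Real.exp δ * ∫ z, Real.exp (ℓ z) ∂μ := by
    rw [← integral_const_mul]
    exact integral_mono hℓ' (hℓ.const_mul _) fun z => hexp (by rw [abs_sub_comm]; exact hδ z)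
  have hZpos := integral_exp_pos hℓ
  have hZpos' := integral_exp_pos hℓ'
  rw [softmaxWeight, softmaxWeight, div_le_iff₀ hZpos, two_mul, Real.exp_add]
  calc Real.exp (ℓ y) ≤ Real.exp δ * Real.exp (ℓ' y) := hexp (hδ y)
    _ = Real.exp δ * (Real.exp (ℓ' y) / ∫ z, Real.exp (ℓ' z) ∂μ) * ∫ z, Real.exp (ℓ' z) ∂μ := by
      field_simp
    _ ≤ Real.exp δ * (Real.exp (ℓ' y) / ∫ z, Real.exp (ℓ' z) ∂μ) *
        (Real.exp δ * ∫ z, Real.exp (ℓ z) ∂μ) := by gcongr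
    _ = _ := by ring

lemma abs_softmaxWeight_sub_le [NeZero μ]
    (hℓ : Integrable (fun y => Real.exp (ℓ y)) μ) (hℓ' : Integrable (fun y => Real.exp (ℓ' y)) μ)
    {δ : ℝ} (hδ : ∀ y, |ℓ y - ℓ' y| ≤ δ) (y : α) :
    |softmaxWeight μ ℓ y - softmaxWeight μ ℓ' y| ≤
      (Real.exp (2 * δ) - 1) * softmaxWeight μ ℓ' y := by
  have hδ0 : 0 ≤ δ := (abs_nonneg _).trans (hδ y)
  refine abs_sub_le_sub_one_mul_of_le_mul
    (Real.one_le_exp (by positivity)) (softmaxWeight_le_exp_two_mul_softmaxWeight hℓ hℓ' hδ y)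
    (softmaxWeight_le_exp_two_mul_softmaxWeight hℓ' hℓ (fun z => ?_) y)
  rw [abs_sub_comm]; exact hδ z

lemma norm_softmaxAverage_le [NeZero μ] (hℓ : Integrable (fun y => Real.exp (ℓ y)) μ) {M : ℝ}
    (hu : ∀ y, ‖u y‖ ≤ M) : ‖softmaxAverage μ ℓ u‖ ≤ M := by
  calc ‖softmaxAverage μ ℓ u‖ ≤ ∫ y, softmaxWeight μ ℓ y * M ∂μ := by
        refine norm_integral_le_of_norm_le ((integrable_softmaxWeight hℓ).mul_const M) ?_
        filter_upwards with y
        rw [norm_smul, Real.norm_of_nonneg (softmaxWeight_pos hℓ y).le]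
        exact mul_le_mul_of_nonneg_left (hu y) (softmaxWeight_pos hℓ y).le
    _ = M := by rw [integral_mul_const, integral_softmaxWeight hℓ, one_mul]

lemma norm_softmaxAverage_sub_le [NeZero μ]
    (hℓ : Integrable (fun y => Real.exp (ℓ y)) μ) (hℓ' : Integrable (fun y => Real.exp (ℓ' y)) μ)
    (hu : AEStronglyMeasurable u μ) {M : ℝ} (hM : ∀ y, ‖u y‖ ≤ M)
    {δ : ℝ} (hδ : ∀ y, |ℓ y - ℓ' y| ≤ δ) :
    ‖softmaxAverage μ ℓ u - softmaxAverage μ ℓ' u‖ ≤ (Real.exp (2 * δ) - 1) * M := by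
  have hint : ∀ {ℓ : α → ℝ}, Integrable (fun y => Real.exp (ℓ y)) μ →
      Integrable (fun y => softmaxWeight μ ℓ y • u y) μ := fun hℓ =>
    (integrable_softmaxWeight hℓ).smul_bdd M hu (Filter.Eventually.of_forall hM)
  calc ‖softmaxAverage μ ℓ u - softmaxAverage μ ℓ' u‖
      = ‖∫ y, (softmaxWeight μ ℓ y - softmaxWeight μ ℓ' y) • u y ∂μ‖ := by
        simp only [softmaxAverage, sub_smul, integral_sub (hint hℓ) (hint hℓ')]
    _ ≤ ∫ y, (Real.exp (2 * δ) - 1) * M * softmaxWeight μ ℓ' y ∂μ := by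
        refine norm_integral_le_of_norm_le ((integrable_softmaxWeight hℓ').const_mul _) ?_
        filter_upwards with y
        rw [norm_smul, Real.norm_eq_abs, mul_right_comm]
        exact mul_le_mul (abs_softmaxWeight_sub_le hℓ hℓ' hδ y) (hM y) (norm_nonneg _)
          ((abs_nonneg _).trans (abs_softmaxWeight_sub_le hℓ hℓ' hδ y))
    _ = (Real.exp (2 * δ) - 1) * M := by
        rw [integral_const_mul, integral_softmaxWeight hℓ', mul_one]

lemma stronglyMeasurable_softmaxAverage {β : Type*} [MeasurableSpace β] [SFinite μ]
    {ℓ : β → α → ℝ} (hℓ : Measurable (uncurry ℓ)) (hu : StronglyMeasurable u) :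
    StronglyMeasurable fun x => softmaxAverage μ (ℓ x) u := by
  have hexp : Measurable fun q : β × α => Real.exp (ℓ q.1 q.2) := Real.measurable_exp.comp hℓ
  have hZ : Measurable fun x => ∫ z, Real.exp (ℓ x z) ∂μ :=
    hexp.stronglyMeasurable.integral_prod_right'.measurable
  exact ((hexp.div (hZ.comp measurable_fst)).stronglyMeasurable.smul
    (hu.comp_measurable measurable_snd)).integral_prod_right'

end Softmax

lemma continuous_uncurry_of_abs_sub_le {E F G : Type*} [SeminormedAddCommGroup E]
    [SeminormedAddCommGroup F] [SeminormedAddCommGroup G] {ℓ : E → F → G → ℝ} {L : ℝ}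
    (hℓ : ∀ a b c a' b' c', |ℓ a b c - ℓ a' b' c'| ≤ L * (‖a - a'‖ + ‖b - b'‖ + ‖c - c'‖))
    (hL : 0 ≤ L) : Continuous fun q : E × F × G => ℓ q.1 q.2.1 q.2.2 := by
  refine (LipschitzWith.of_dist_le' (K := 3 * L) fun q q' => ?_).continuous
  have h₁ : ‖q.1 - q'.1‖ ≤ dist q q' := (norm_fst_le (q - q')).trans_eq (dist_eq_norm _ _).symm
  have h₂ : ‖q.2.1 - q'.2.1‖ ≤ dist q q' :=
    ((norm_fst_le (q - q').2).trans (norm_snd_le (q - q'))).trans_eq (dist_eq_norm _ _).symm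
  have h₃ : ‖q.2.2 - q'.2.2‖ ≤ dist q q' :=
    ((norm_snd_le (q - q').2).trans (norm_snd_le (q - q'))).trans_eq (dist_eq_norm _ _).symm
  rw [Real.dist_eq]
  calc _ ≤ L * (‖q.1 - q'.1‖ + ‖q.2.1 - q'.2.1‖ + ‖q.2.2 - q'.2.2‖) := hℓ _ _ _ _ _ _
    _ ≤ 3 * L * dist q q' := by nlinarith

section AttentionLayer

variable {χ E P : Type*} [NormedAddCommGroup E] [NormedAddCommGroup P]
  {ℓ : E → E → P → ℝ} {v : E → E} {p : χ → χ → P} {h : χ → E} {L : ℝ}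

def attentionLogit (ℓ : E → E → P → ℝ) (p : χ → χ → P) (h : χ → E) (x y : χ) : ℝ :=
  ℓ (h x) (h y) (p x y)

noncomputable def attentionLayer [MeasurableSpace χ] [NormedSpace ℝ E] (μ : Measure χ)
    (ℓ : E → E → P → ℝ) (v : E → E) (p : χ → χ → P) (h : χ → E) (x : χ) : E :=
  softmaxAverage μ (attentionLogit ℓ p h x) (v ∘ h)

lemma stronglyMeasurable_attentionLogit [MeasurableSpace χ]
    (hℓ : Continuous fun q : E × E × P => ℓ q.1 q.2.1 q.2.2)
    (hp : StronglyMeasurable (uncurry p)) (hh : StronglyMeasurable h) :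
    StronglyMeasurable (uncurry (attentionLogit ℓ p h)) :=
  hℓ.comp_stronglyMeasurable ((hh.comp_measurable measurable_fst).prodMk
    ((hh.comp_measurable measurable_snd).prodMk hp))

lemma integrable_exp_attentionLogit [MeasurableSpace χ] {μ : Measure χ} [IsFiniteMeasure μ]
    (hℓ : ∀ a b c a' b' c', |ℓ a b c - ℓ a' b' c'| ≤ L * (‖a - a'‖ + ‖b - b'‖ + ‖c - c'‖))
    (hL : 0 ≤ L) (hmeas : StronglyMeasurable (uncurry (attentionLogit ℓ p h)))
    {M Mp : ℝ} (hh : ∀ x, ‖h x‖ ≤ M) (hp : ∀ x y, ‖p x y‖ ≤ Mp) (x : χ) :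
    Integrable (fun y => Real.exp (attentionLogit ℓ p h x y)) μ := by
  refine integrable_exp_of_le (B := ℓ 0 0 0 + L * (M + M + Mp))
    (hmeas.comp_measurable measurable_prodMk_left).aestronglyMeasurable fun y => ?_
  have hℓ0 := (abs_le.1 (hℓ (h x) (h y) (p x y) 0 0 0)).2
  simp only [sub_zero] at hℓ0
  have hnorms := mul_le_mul_of_nonneg_left (add_le_add (add_le_add (hh x) (hh y)) (hp x y)) hL
  rw [attentionLogit]
  linarith

lemma norm_attentionLayer_sub_le [MetricSpace χ] [MeasurableSpace χ] [NormedSpace ℝ E]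
    {μ : Measure χ} [NeZero μ]
    (hℓ : ∀ a b c a' b' c', |ℓ a b c - ℓ a' b' c'| ≤ L * (‖a - a'‖ + ‖b - b'‖ + ‖c - c'‖))
    (hL : 0 ≤ L) (hexp : ∀ x, Integrable (fun y => Real.exp (attentionLogit ℓ p h x y)) μ)
    (hvh : AEStronglyMeasurable (v ∘ h) μ) {M : ℝ} (hM : ∀ y, ‖v (h y)‖ ≤ M)
    {x x' : χ} {C Lp : ℝ} (hhx : ‖h x - h x'‖ ≤ C * dist x x')
    (hpx : ∀ y, ‖p x y - p x' y‖ ≤ Lp * dist x x')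
    (hsmall : 2 * L * (C + Lp) * dist x x' ≤ 1) :
    ‖attentionLayer μ ℓ v p h x - attentionLayer μ ℓ v p h x'‖ ≤
      4 * L * (C + Lp) * M * dist x x' := by
  set δ := L * (C + Lp) * dist x x'
  have hδ : ∀ y, |attentionLogit ℓ p h x y - attentionLogit ℓ p h x' y| ≤ δ := fun y => by
    have hℓx := hℓ (h x) (h y) (p x y) (h x') (h y) (p x' y)
    rw [sub_self, norm_zero, add_zero] at hℓx
    refine hℓx.trans ?_
    have hnorms := mul_le_mul_of_nonneg_left (add_le_add hhx (hpx y)) hL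
    linarith
  obtain ⟨y⟩ := μ.nonempty_of_neZero
  have hδ0 : 0 ≤ δ := (abs_nonneg _).trans (hδ y)
  have hM0 : 0 ≤ M := (norm_nonneg _).trans (hM y)
  have hexp_le : Real.exp (2 * δ) - 1 ≤ 4 * δ := by
    have h2δ : |2 * δ| = 2 * δ := abs_of_nonneg (by linarith)
    have hexp2δ := (le_abs_self _).trans (Real.abs_exp_sub_one_le (h2δ.le.trans (by linarith)))
    rw [h2δ] at hexp2δ
    linarith
  calc _ ≤ (Real.exp (2 * δ) - 1) * M :=
        norm_softmaxAverage_sub_le (hexp x) (hexp x') hvh hM hδ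
    _ ≤ 4 * δ * M := mul_le_mul_of_nonneg_right hexp_le hM0
    _ = _ := by ring

lemma attentionLayer_bounded_locally_lipschitz [MetricSpace χ] [MeasurableSpace χ]
    [NormedSpace ℝ E] {μ : Measure χ} [IsProbabilityMeasure μ]
    (hℓ : ∀ a b c a' b' c', |ℓ a b c - ℓ a' b' c'| ≤ L * (‖a - a'‖ + ‖b - b'‖ + ‖c - c'‖))
    (hL : 0 ≤ L) {Lv : ℝ} (hv : ∀ a b, ‖v a - v b‖ ≤ Lv * ‖a - b‖) (hv0 : v 0 = 0) (hLv : 0 ≤ Lv)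
    (hpmeas : StronglyMeasurable (uncurry p)) {Mp Lp : ℝ} (hpbdd : ∀ x y, ‖p x y‖ ≤ Mp)
    (hplip : ∀ x x' y, ‖p x y - p x' y‖ ≤ Lp * dist x x') (hLp : 0 ≤ Lp)
    (hmeas : StronglyMeasurable h) {M C r : ℝ} (hbdd : ∀ x, ‖h x‖ ≤ M)
    (hlip : ∀ x x', dist x x' ≤ r → ‖h x - h x'‖ ≤ C * dist x x') (hC : 0 ≤ C)
    (hsmall : 2 * L * (C + Lp) * r ≤ 1) :
    StronglyMeasurable (attentionLayer μ ℓ v p h) ∧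
      (∀ x, ‖attentionLayer μ ℓ v p h x‖ ≤ Lv * M) ∧
      ∀ x x', dist x x' ≤ r → ‖attentionLayer μ ℓ v p h x - attentionLayer μ ℓ v p h x'‖ ≤
        4 * L * (C + Lp) * (Lv * M) * dist x x' := by
  have hlogit := stronglyMeasurable_attentionLogit
    (continuous_uncurry_of_abs_sub_le hℓ hL) hpmeas hmeas
  have hexp := integrable_exp_attentionLogit (μ := μ) hℓ hL hlogit hbdd hpbdd
  have hvLip : LipschitzWith Lv.toNNReal v :=
    LipschitzWith.of_dist_le' fun a b => by simpa only [dist_eq_norm] using hv a b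
  have hvh : StronglyMeasurable (v ∘ h) := hvLip.continuous.comp_stronglyMeasurable hmeas
  have hM : ∀ y, ‖v (h y)‖ ≤ Lv * M := fun y => calc
    ‖v (h y)‖ ≤ Lv * ‖h y‖ := by simpa [hv0] using hv (h y) 0
    _ ≤ Lv * M := mul_le_mul_of_nonneg_left (hbdd y) hLv
  refine ⟨stronglyMeasurable_softmaxAverage hlogit.measurable hvh,
    fun x => norm_softmaxAverage_le (hexp x) hM, fun x x' hxx' => ?_⟩
  refine norm_attentionLayer_sub_le hℓ hL hexp hvh.aestronglyMeasurable hM (hlip x x' hxx')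
    (hplip x x') (hsmall.trans' ?_)
  gcongr

end AttentionLayer

def hiddenLipBound (A Lv F Lf Lp : ℝ) (k : ℕ) : ℝ :=
  4 ^ k * A ^ k * Lv ^ (k * (k + 1) / 2) * F ^ k * (Lf + k * Lp)

lemma hiddenLipBound_nonneg {A Lv F Lf Lp : ℝ} (hA : 0 ≤ A) (hLv : 0 ≤ Lv) (hF : 0 ≤ F)
    (hLf : 0 ≤ Lf) (hLp : 0 ≤ Lp) (k : ℕ) : 0 ≤ hiddenLipBound A Lv F Lf Lp k := by
  rw [hiddenLipBound]
  positivity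

lemma four_mul_hiddenLipBound_add_le {A Lv F Lf Lp : ℝ} (hLv : 1 ≤ Lv) (hAF : 1 ≤ 4 * A * F)
    (hLp : 0 ≤ Lp) (k : ℕ) :
    4 * A * (hiddenLipBound A Lv F Lf Lp k + Lp) * (Lv ^ (k + 1) * F) ≤
      hiddenLipBound A Lv F Lf Lp (k + 1) := by
  set Q := 4 ^ k * A ^ k * Lv ^ (k * (k + 1) / 2) * F ^ k
  have hQ : 1 ≤ Q := calc
    1 ≤ (4 * A * F) ^ k * Lv ^ (k * (k + 1) / 2) :=
      one_le_mul_of_one_le_of_one_le (one_le_pow₀ hAF) (one_le_pow₀ hLv)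
    _ = Q := by ring
  have htri : (k + 1) * (k + 1 + 1) / 2 = k * (k + 1) / 2 + (k + 1) := by
    rw [show (k + 1) * (k + 1 + 1) = k * (k + 1) + 2 * (k + 1) by ring,
      Nat.add_mul_div_left _ _ two_pos]
  have hB : hiddenLipBound A Lv F Lf Lp (k + 1) =
      4 * (A * F) * Lv ^ (k + 1) * (Q * (Lf + k * Lp) + Q * Lp) := by
    rw [hiddenLipBound, htri, pow_add]
    push_cast
    ring
  have hfactor : 0 ≤ 4 * (A * F) * Lv ^ (k + 1) := by
    have hLv0 : 0 ≤ Lv := by linarith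
    have hAF0 : 0 ≤ A * F := by linarith
    positivity
  calc _ = 4 * (A * F) * Lv ^ (k + 1) * (Q * (Lf + k * Lp) + Lp) := by
        rw [hiddenLipBound]; ring
    _ ≤ _ := by
        rw [hB]
        gcongr
        exact le_mul_of_one_le_left hLp hQ

theorem stmt4_general
    {χ : Type*} [MetricSpace χ] [MeasurableSpace χ]
    (μ : Measure χ) [IsProbabilityMeasure μ]
    (dh dp K : ℕ)
    (logit : ℕ → EuclideanSpace ℝ (Fin dh) → EuclideanSpace ℝ (Fin dh) →
      EuclideanSpace ℝ (Fin dp) → ℝ)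
    (v : ℕ → EuclideanSpace ℝ (Fin dh) → EuclideanSpace ℝ (Fin dh))
    (p : χ → χ → EuclideanSpace ℝ (Fin dp))
    (f : χ → EuclideanSpace ℝ (Fin dh))
    (Llogit Lv Lp Lf r : ℝ)
    (hLlogit : 0 ≤ Llogit) (hLp : 0 ≤ Lp) (hLf : 0 ≤ Lf)
    (hlogit : ∀ k < K, ∀ a b c a' b' c', |logit k a b c - logit k a' b' c'| ≤
      Llogit * (‖a - a'‖ + ‖b - b'‖ + ‖c - c'‖))
    (hv : ∀ k < K, ∀ a b, ‖v k a - v k b‖ ≤ Lv * ‖a - b‖)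
    (hv0 : ∀ k < K, v k 0 = 0)
    (hpmeas : Measurable fun q : χ × χ => p q.1 q.2)
    (hpbdd : ∃ M : ℝ, ∀ x y, ‖p x y‖ ≤ M)
    (hplip1 : ∀ x x' y, ‖p x y - p x' y‖ ≤ Lp * dist x x')
    (hfmeas : Measurable f)
    (hfbdd : ∃ M : ℝ, ∀ x, ‖f x‖ ≤ M)
    (hflip : ∀ x y, ‖f x - f y‖ ≤ Lf * dist x y)
    (hseq : ℕ → χ → EuclideanSpace ℝ (Fin dh))
    (h0 : hseq 0 = f)
    (hrec : ∀ k < K, ∀ x,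
      hseq (k + 1) x = ∫ y, (Real.exp (logit k (hseq k x) (hseq k y) (p x y)) /
        ∫ z, Real.exp (logit k (hseq k x) (hseq k z) (p x z)) ∂μ) • v k (hseq k y) ∂μ)
    (hLv : 1 ≤ Lv)
    (hLf4 : 1 ≤ 4 * Llogit * ⨆ x, ‖f x‖)
    (hrsmall : ∀ k < K,
      ((4 : ℝ) ^ k * Llogit ^ k * Lv ^ (k * (k + 1) / 2) * (⨆ x, ‖f x‖) ^ k *
          (Lf + (k : ℝ) * Lp) + Lp) * r ≤ 1 / (2 * Llogit)) :
    ∀ k < K,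
      (∀ x y : χ, dist x y ≤ r →
        ‖hseq k x - hseq k y‖ ≤
          (4 : ℝ) ^ k * Llogit ^ k * Lv ^ (k * (k + 1) / 2) * (⨆ x, ‖f x‖) ^ k *
            (Lf + (k : ℝ) * Lp) * dist x y) ∧
      (∀ x : χ, ‖hseq k x‖ ≤ Lv ^ k * ⨆ x, ‖f x‖) := by
  obtain ⟨Mp, hMp⟩ := hpbdd
  obtain ⟨Mf, hMf⟩ := hfbdd
  set F := ⨆ x, ‖f x‖
  have hF : ∀ x, ‖f x‖ ≤ F := le_ciSup ⟨Mf, Set.forall_mem_range.2 hMf⟩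
  have hF0 : 0 ≤ F := Real.iSup_nonneg fun x => norm_nonneg _
  have hA : 0 < Llogit := by
    by_contra! h
    nlinarith
  have hLv0 : 0 ≤ Lv := by linarith
  suffices H : ∀ k < K, StronglyMeasurable (hseq k) ∧ (∀ x, ‖hseq k x‖ ≤ Lv ^ k * F) ∧
      ∀ x y, dist x y ≤ r → ‖hseq k x - hseq k y‖ ≤ hiddenLipBound Llogit Lv F Lf Lp k * dist x y
    from fun k hk => ⟨(H k hk).2.2, (H k hk).2.1⟩
  intro k
  induction k with
  | zero =>
    intro _
    rw [h0]
    exact ⟨hfmeas.stronglyMeasurable, by simpa using hF,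
      fun x y _ => by simpa [hiddenLipBound] using hflip x y⟩
  | succ k ih =>
    intro hk
    have hk' : k < K := by omega
    obtain ⟨hmeas, hbdd, hlip⟩ := ih hk'
    have hsmall : (hiddenLipBound Llogit Lv F Lf Lp k + Lp) * r ≤ 1 / (2 * Llogit) := hrsmall k hk'
    rw [le_div_iff₀ (by positivity)] at hsmall
    obtain ⟨hmeas', hbdd', hlip'⟩ := attentionLayer_bounded_locally_lipschitz (μ := μ)
      (hlogit k hk') hLlogit (hv k hk') (hv0 k hk') hLv0 hpmeas.stronglyMeasurable hMp hplip1 hLp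
      hmeas hbdd hlip (hiddenLipBound_nonneg hLlogit hLv0 hF0 hLf hLp k) (by linarith)
    have hlayer : hseq (k + 1) = attentionLayer μ (logit k) (v k) p (hseq k) := funext (hrec k hk')
    rw [hlayer]
    refine ⟨hmeas', fun x => (hbdd' x).trans_eq (by ring), fun x y hxy => (hlip' x y hxy).trans ?_⟩
    exact mul_le_mul_of_nonneg_right
      ((four_mul_hiddenLipBound_add_le hLv hLf4 hLp k).trans_eq' (by ring)) dist_nonneg

/-- Local Lipschitzness propagates through the layers of a continuous Transformer:
if `h⁽⁰⁾ = f` and `h⁽ᵏ⁺¹⁾(x) = ∫ Att⁽ᵏ⁾(x,y) • v⁽ᵏ⁾(h⁽ᵏ⁾(y)) dμ(y)` with Lipschitz logit,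
value and positional-encoding functions, then for every `k < K`,
`LocLip_r(h⁽ᵏ⁾) ≤ 4ᵏ·L_logitᵏ·L_v^{k(k+1)/2}·‖f‖_∞ᵏ·(L_f + k·L_p)` and
`‖h⁽ᵏ⁾‖_∞ ≤ L_vᵏ·‖f‖_∞`. -/
theorem stmt4
    {χ : Type*} [MetricSpace χ] [MeasurableSpace χ]
    (μ : Measure χ) [IsProbabilityMeasure μ]
    (dh dp K : ℕ)
    (logit : ℕ → EuclideanSpace ℝ (Fin dh) → EuclideanSpace ℝ (Fin dh) →
      EuclideanSpace ℝ (Fin dp) → ℝ)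
    (v : ℕ → EuclideanSpace ℝ (Fin dh) → EuclideanSpace ℝ (Fin dh))
    (p : χ → χ → EuclideanSpace ℝ (Fin dp))
    (f : χ → EuclideanSpace ℝ (Fin dh))
    (Llogit Lv Lp Lf r : ℝ)
    (hLlogit : 0 ≤ Llogit) (hLp : 0 ≤ Lp) (hLf : 0 ≤ Lf) (hr : 0 < r)
    (hlogit : ∀ k < K, ∀ a b c a' b' c', |logit k a b c - logit k a' b' c'| ≤
      Llogit * (‖a - a'‖ + ‖b - b'‖ + ‖c - c'‖))
    (hv : ∀ k < K, ∀ a b, ‖v k a - v k b‖ ≤ Lv * ‖a - b‖)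
    (hv0 : ∀ k < K, v k 0 = 0)
    (hpmeas : Measurable fun q : χ × χ => p q.1 q.2)
    (hpbdd : ∃ M : ℝ, ∀ x y, ‖p x y‖ ≤ M)
    (hplip1 : ∀ x x' y, ‖p x y - p x' y‖ ≤ Lp * dist x x')
    (hplip2 : ∀ x y y', ‖p x y - p x y'‖ ≤ Lp * dist y y')
    (hfmeas : Measurable f)
    (hfbdd : ∃ M : ℝ, ∀ x, ‖f x‖ ≤ M)
    (hflip : ∀ x y, ‖f x - f y‖ ≤ Lf * dist x y)
    (hseq : ℕ → χ → EuclideanSpace ℝ (Fin dh))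
    (h0 : hseq 0 = f)
    (hrec : ∀ k < K, ∀ x,
      hseq (k + 1) x = ∫ y, (Real.exp (logit k (hseq k x) (hseq k y) (p x y)) /
        ∫ z, Real.exp (logit k (hseq k x) (hseq k z) (p x z)) ∂μ) • v k (hseq k y) ∂μ)
    (hLv : 1 ≤ Lv)
    (hLf4 : 1 ≤ 4 * Llogit * ⨆ x, ‖f x‖)
    (hrsmall : ∀ k < K,
      ((4 : ℝ) ^ k * Llogit ^ k * Lv ^ (k * (k + 1) / 2) * (⨆ x, ‖f x‖) ^ k *
          (Lf + (k : ℝ) * Lp) + Lp) * r ≤ 1 / (2 * Llogit)) :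
    ∀ k < K,
      (∀ x y : χ, dist x y ≤ r →
        ‖hseq k x - hseq k y‖ ≤
          (4 : ℝ) ^ k * Llogit ^ k * Lv ^ (k * (k + 1) / 2) * (⨆ x, ‖f x‖) ^ k *
            (Lf + (k : ℝ) * Lp) * dist x y) ∧
      (∀ x : χ, ‖hseq k x‖ ≤ Lv ^ k * ⨆ x, ‖f x‖) :=
  stmt4_general μ dh dp K logit v p f Llogit Lv Lp Lf r hLlogit hLp hLf hlogit hv hv0 hpmeas hpbdd
    hplip1 hfmeas hfbdd hflip hseq h0 hrec hLv hLf4 hrsmall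
end

section
/- Let (χ, μ) be a probability space, logit: ℝ^{d_h} × ℝ^{d_h} × ℝ^{d_p} → ℝ Lipschitz with constant L_logit (with respect to the sum of the Euclidean norms of the three arguments), and v: ℝ^{d_h} → ℝ^{d_h} Lipschitz with constant L_v and v(0) = 0. Let h, ĥ: χ → ℝ^{d_h} and p, p̂: χ × χ → ℝ^{d_p} be bounded measurable, and for a pair (g, q) define next_{g,q}(x) = ∫_χ Att_{g,q}(x,y)·v(g(y)) dμ(y), where Att_{g,q}(x,y) = exp(logit(g(x), g(y), q(x,y))) / ∫_χ exp(logit(g(x), g(z), q(x,z))) dμ(z). Assume 2·sup_x ‖h(x) − ĥ(x)‖₂ + sup_{x,y} ‖p(x,y) − p̂(x,y)‖₂ ≤ 1/(2·L_logit). Then sup_x ‖next_{ĥ,p̂}(x) − next_{h,p}(x)‖₂ ≤ 4·L_v·(L_logit·‖h‖_∞ + 1)·(2·sup_x ‖h(x) − ĥ(x)‖₂ + sup_{x,y} ‖p(x,y) − p̂(x,y)‖₂), where ‖h‖_∞ = sup_x ‖h(x)‖₂. -/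
/-! The perturbed logits differ from the original ones by at most
`t = L_logit · (2 δh + δp)` pointwise, so the perturbed softmax weights lie between
`e^{-2t}` and `e^{2t}` times the original ones, whence `|A' - A| ≤ (e^{2t} - 1) A`.
Writing `A' v(ĥ) - A v(h) = A' (v(ĥ) - v(h)) + (A' - A) v(h)` and integrating against
weights of total mass one bounds the error by `L_v δh + (e^{2t} - 1) L_v ‖h‖_∞`,
and `e^{2t} - 1 ≤ 4t` because `2t ≤ 1`. -/

open MeasureTheory Real

lemma abs_sub_le_of_le_mul_of_le_mul {a b c : ℝ} (ha : 0 < a) (hb : 0 < b)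
    (hba : b ≤ c * a) (hab : a ≤ c * b) : |b - a| ≤ (c - 1) * a := by
  have hc : 1 ≤ c := by nlinarith
  rw [abs_sub_le_iff]
  constructor <;> nlinarith

lemma norm_smul_sub_smul_le {E : Type*} [SeminormedAddCommGroup E] [NormedSpace ℝ E]
    {a b : ℝ} (hb : 0 ≤ b) (u v : E) :
    ‖b • v - a • u‖ ≤ b * ‖v - u‖ + |b - a| * ‖u‖ := by
  have hsplit : b • v - a • u = b • (v - u) + (b - a) • u := by
    rw [smul_sub, sub_smul]; abel
  calc ‖b • v - a • u‖ ≤ ‖b • (v - u)‖ + ‖(b - a) • u‖ := hsplit ▸ norm_add_le _ _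
    _ = b * ‖v - u‖ + |b - a| * ‖u‖ := by
        rw [norm_smul, norm_smul, Real.norm_eq_abs, Real.norm_eq_abs, abs_of_nonneg hb]

section Softmax

variable {χ : Type*} [MeasurableSpace χ] {μ : Measure χ} {ℓ ℓ' : χ → ℝ}

/-- The density of `μ.tilted ℓ` with respect to `μ`; it is `0` unless `exp ∘ ℓ` is integrable. -/
noncomputable def softmax (μ : Measure χ) (ℓ : χ → ℝ) (y : χ) : ℝ :=
  exp (ℓ y) / ∫ z, exp (ℓ z) ∂μ

lemma integrable_softmax (hℓ : Integrable (fun y => exp (ℓ y)) μ) :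
    Integrable (softmax μ ℓ) μ :=
  hℓ.div_const _

lemma integrable_exp_of_le_s5 [IsFiniteMeasure μ] (hℓ : Measurable ℓ) {B : ℝ} (hB : ∀ y, ℓ y ≤ B) :
    Integrable (fun y => exp (ℓ y)) μ := by
  refine Integrable.mono' (integrable_const (exp B)) (measurable_exp.comp hℓ).aestronglyMeasurable
    (ae_of_all _ fun y => ?_)
  rw [Real.norm_eq_abs, abs_of_pos (exp_pos _)]
  exact exp_le_exp.2 (hB y)

variable [NeZero μ]

lemma softmax_pos (hℓ : Integrable (fun y => exp (ℓ y)) μ) (y : χ) : 0 < softmax μ ℓ y :=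
  div_pos (exp_pos _) (integral_exp_pos hℓ)

lemma integral_softmax (hℓ : Integrable (fun y => exp (ℓ y)) μ) :
    ∫ y, softmax μ ℓ y ∂μ = 1 := by
  simp only [softmax]
  rw [integral_div]
  exact div_self (integral_exp_pos hℓ).ne'

lemma softmax_le_exp_mul_softmax (hℓ : Integrable (fun y => exp (ℓ y)) μ)
    (hℓ' : Integrable (fun y => exp (ℓ' y)) μ) {t : ℝ} (hℓℓ' : ∀ y, |ℓ' y - ℓ y| ≤ t)
    (y : χ) : softmax μ ℓ' y ≤ exp (2 * t) * softmax μ ℓ y := by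
  have hZ : 0 < ∫ z, exp (ℓ z) ∂μ := integral_exp_pos hℓ
  have hnum : exp (ℓ' y) ≤ exp t * exp (ℓ y) := by
    rw [← exp_add]
    exact exp_le_exp.2 (by linarith [(abs_le.1 (hℓℓ' y)).2])
  have hden : exp (-t) * ∫ z, exp (ℓ z) ∂μ ≤ ∫ z, exp (ℓ' z) ∂μ := by
    rw [← integral_const_mul]
    refine integral_mono (hℓ.const_mul _) hℓ' fun z => ?_
    rw [← exp_add]
    exact exp_le_exp.2 (by linarith [(abs_le.1 (hℓℓ' z)).1])
  calc softmax μ ℓ' y ≤ exp t * exp (ℓ y) / (exp (-t) * ∫ z, exp (ℓ z) ∂μ) :=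
        div_le_div₀ (by positivity) hnum (by positivity) hden
    _ = exp (2 * t) * softmax μ ℓ y := by
        rw [softmax, exp_neg, two_mul, exp_add]
        field_simp

lemma abs_softmax_sub_softmax_le (hℓ : Integrable (fun y => exp (ℓ y)) μ)
    (hℓ' : Integrable (fun y => exp (ℓ' y)) μ) {t : ℝ} (hℓℓ' : ∀ y, |ℓ' y - ℓ y| ≤ t)
    (y : χ) : |softmax μ ℓ' y - softmax μ ℓ y| ≤ (exp (2 * t) - 1) * softmax μ ℓ y :=
  abs_sub_le_of_le_mul_of_le_mul (softmax_pos hℓ y) (softmax_pos hℓ' y)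
    (softmax_le_exp_mul_softmax hℓ hℓ' hℓℓ' y)
    (softmax_le_exp_mul_softmax hℓ' hℓ (fun z => abs_sub_comm (ℓ' z) (ℓ z) ▸ hℓℓ' z) y)

theorem norm_integral_softmax_smul_sub_le {E : Type*} [NormedAddCommGroup E] [NormedSpace ℝ E]
    {w w' : χ → E} (hℓ : Integrable (fun y => exp (ℓ y)) μ)
    (hℓ' : Integrable (fun y => exp (ℓ' y)) μ) (hw : AEStronglyMeasurable w μ)
    (hw' : AEStronglyMeasurable w' μ) {t a b : ℝ} (hℓℓ' : ∀ y, |ℓ' y - ℓ y| ≤ t)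
    (hww' : ∀ y, ‖w' y - w y‖ ≤ a) (hw_le : ∀ y, ‖w y‖ ≤ b) :
    ‖(∫ y, softmax μ ℓ' y • w' y ∂μ) - ∫ y, softmax μ ℓ y • w y ∂μ‖ ≤
      a + (exp (2 * t) - 1) * b := by
  have hA := integrable_softmax hℓ
  have hA' := integrable_softmax hℓ'
  have hAw : Integrable (fun y => softmax μ ℓ y • w y) μ :=
    hA.smul_bdd (f := w) b hw (ae_of_all _ hw_le)
  have hA'w' : Integrable (fun y => softmax μ ℓ' y • w' y) μ :=
    hA'.smul_bdd (f := w') (b + a) hw' (ae_of_all _ fun y =>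
      (norm_le_norm_add_norm_sub' (w' y) (w y)).trans (add_le_add (hw_le y) (hww' y)))
  have hpointwise : ∀ y, ‖softmax μ ℓ' y • w' y - softmax μ ℓ y • w y‖ ≤
      a * softmax μ ℓ' y + ((exp (2 * t) - 1) * b) * softmax μ ℓ y := by
    intro y
    have habs := abs_softmax_sub_softmax_le hℓ hℓ' hℓℓ' y
    calc _ ≤ softmax μ ℓ' y * ‖w' y - w y‖ + |softmax μ ℓ' y - softmax μ ℓ y| * ‖w y‖ :=
          norm_smul_sub_smul_le (softmax_pos hℓ' y).le _ _
      _ ≤ softmax μ ℓ' y * a + ((exp (2 * t) - 1) * softmax μ ℓ y) * b :=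
          add_le_add (mul_le_mul_of_nonneg_left (hww' y) (softmax_pos hℓ' y).le)
            (mul_le_mul habs (hw_le y) (norm_nonneg _) ((abs_nonneg _).trans habs))
      _ = _ := by ring
  rw [← integral_sub hA'w' hAw]
  calc _ ≤ ∫ y, (a * softmax μ ℓ' y + ((exp (2 * t) - 1) * b) * softmax μ ℓ y) ∂μ :=
        norm_integral_le_of_norm_le ((hA'.const_mul a).add (hA.const_mul _))
          (ae_of_all _ hpointwise)
    _ = a + (exp (2 * t) - 1) * b := by
        rw [integral_add (hA'.const_mul a) (hA.const_mul _), integral_const_mul,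
          integral_const_mul, integral_softmax hℓ, integral_softmax hℓ']
        ring

end Softmax

section Attention

variable {χ E P F : Type*} [MeasurableSpace χ] {μ : Measure χ}
  [NormedAddCommGroup E] [NormedAddCommGroup P] [NormedAddCommGroup F] [NormedSpace ℝ F]

lemma continuous_uncurry_of_abs_sub_le_s5 {logit : E → E → P → ℝ} {L : ℝ} (hL : 0 ≤ L)
    (hlogit : ∀ a b c a' b' c', |logit a b c - logit a' b' c'| ≤
      L * (‖a - a'‖ + ‖b - b'‖ + ‖c - c'‖)) :
    Continuous fun u : E × E × P => logit u.1 u.2.1 u.2.2 := by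
  refine (LipschitzWith.of_dist_le' (K := 3 * L) fun u u' => ?_).continuous
  have h₁ : ‖u.1 - u'.1‖ ≤ ‖u - u'‖ := norm_fst_le (u - u')
  have h₂ : ‖u.2.1 - u'.2.1‖ ≤ ‖u - u'‖ := (norm_fst_le (u - u').2).trans (norm_snd_le _)
  have h₃ : ‖u.2.2 - u'.2.2‖ ≤ ‖u - u'‖ := (norm_snd_le (u - u').2).trans (norm_snd_le _)
  rw [Real.dist_eq, dist_eq_norm]
  nlinarith [hlogit u.1 u.2.1 u.2.2 u'.1 u'.2.1 u'.2.2]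

variable [MeasurableSpace E] [BorelSpace E] [SecondCountableTopology E]
  [MeasurableSpace P] [BorelSpace P] [SecondCountableTopology P]

lemma integrable_exp_logit [IsFiniteMeasure μ] {logit : E → E → P → ℝ} {L : ℝ} (hL : 0 ≤ L)
    (hlogit : ∀ a b c a' b' c', |logit a b c - logit a' b' c'| ≤
      L * (‖a - a'‖ + ‖b - b'‖ + ‖c - c'‖))
    {g : χ → E} {q : χ → χ → P} (hg : Measurable g)
    (hq : Measurable fun r : χ × χ => q r.1 r.2) (hg_bdd : ∃ M : ℝ, ∀ x, ‖g x‖ ≤ M)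
    (hq_bdd : ∃ M : ℝ, ∀ x y, ‖q x y‖ ≤ M) (x : χ) :
    Integrable (fun y => exp (logit (g x) (g y) (q x y))) μ := by
  obtain ⟨Mg, hMg⟩ := hg_bdd
  obtain ⟨Mq, hMq⟩ := hq_bdd
  have hqx : Measurable fun y => q x y := hq.comp (measurable_const.prodMk measurable_id)
  refine integrable_exp_of_le_s5 ((continuous_uncurry_of_abs_sub_le_s5 hL hlogit).measurable.comp
    (measurable_const.prodMk (hg.prodMk hqx))) (B := logit 0 0 0 + L * (Mg + Mg + Mq)) fun y => ?_
  have h := (abs_le.1 (hlogit (g x) (g y) (q x y) 0 0 0)).2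
  simp only [sub_zero] at h
  nlinarith [hMg x, hMg y, hMq x y]

theorem norm_integral_attention_sub_le [IsFiniteMeasure μ] [NeZero μ] {logit : E → E → P → ℝ}
    {v : E → F} {L Lv : ℝ} (hL : 0 ≤ L) (hLv : 0 ≤ Lv)
    (hlogit : ∀ a b c a' b' c', |logit a b c - logit a' b' c'| ≤
      L * (‖a - a'‖ + ‖b - b'‖ + ‖c - c'‖))
    (hv : ∀ a b, ‖v a - v b‖ ≤ Lv * ‖a - b‖) (hv0 : v 0 = 0)
    {g g' : χ → E} {q q' : χ → χ → P} (hg : Measurable g) (hg' : Measurable g')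
    (hq : Measurable fun r : χ × χ => q r.1 r.2) (hq' : Measurable fun r : χ × χ => q' r.1 r.2)
    (hg_bdd : ∃ M : ℝ, ∀ x, ‖g x‖ ≤ M) (hg'_bdd : ∃ M : ℝ, ∀ x, ‖g' x‖ ≤ M)
    (hq_bdd : ∃ M : ℝ, ∀ x y, ‖q x y‖ ≤ M) (hq'_bdd : ∃ M : ℝ, ∀ x y, ‖q' x y‖ ≤ M)
    {δg δq G : ℝ} (hδg : ∀ y, ‖g' y - g y‖ ≤ δg) (hδq : ∀ x y, ‖q' x y - q x y‖ ≤ δq)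
    (hG : ∀ y, ‖g y‖ ≤ G) (x : χ) :
    ‖(∫ y, softmax μ (fun y => logit (g' x) (g' y) (q' x y)) y • v (g' y) ∂μ) -
        ∫ y, softmax μ (fun y => logit (g x) (g y) (q x y)) y • v (g y) ∂μ‖ ≤
      Lv * δg + (exp (2 * (L * (2 * δg + δq))) - 1) * (Lv * G) := by
  have hv_cont : Continuous v := (LipschitzWith.of_dist_le' (K := Lv) fun a b => by
    simpa only [dist_eq_norm] using hv a b).continuous
  refine norm_integral_softmax_smul_sub_le
    (integrable_exp_logit hL hlogit hg hq hg_bdd hq_bdd x)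
    (integrable_exp_logit hL hlogit hg' hq' hg'_bdd hq'_bdd x)
    (hv_cont.comp_aestronglyMeasurable hg.aestronglyMeasurable)
    (hv_cont.comp_aestronglyMeasurable hg'.aestronglyMeasurable)
    (fun y => ?_) (fun y => ?_) (fun y => ?_)
  · exact (hlogit _ _ _ _ _ _).trans
      (mul_le_mul_of_nonneg_left (by linarith [hδg x, hδg y, hδq x y]) hL)
  · exact (hv _ _).trans (mul_le_mul_of_nonneg_left (hδg y) hLv)
  · simpa [hv0] using (hv (g y) 0).trans (mul_le_mul_of_nonneg_left (by simpa using hG y) hLv)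

end Attention

lemma norm_sub_le_iSup_norm_sub {ι F : Type*} [SeminormedAddCommGroup F] {f g : ι → F}
    (hf : ∃ M : ℝ, ∀ i, ‖f i‖ ≤ M) (hg : ∃ M : ℝ, ∀ i, ‖g i‖ ≤ M) (i : ι) :
    ‖g i - f i‖ ≤ ⨆ j, ‖f j - g j‖ := by
  obtain ⟨Mf, hMf⟩ := hf
  obtain ⟨Mg, hMg⟩ := hg
  rw [norm_sub_rev]
  refine le_ciSup (f := fun j => ‖f j - g j‖) ⟨Mf + Mg, ?_⟩ i
  rintro r ⟨j, rfl⟩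
  exact (norm_sub_le _ _).trans (add_le_add (hMf j) (hMg j))

lemma exp_sub_one_le_two_mul {x : ℝ} (hx₀ : 0 ≤ x) (hx₁ : x ≤ 1) : exp x - 1 ≤ 2 * x := by
  have h := Real.abs_exp_sub_one_le (abs_le.2 ⟨by linarith, hx₁⟩)
  rwa [abs_of_nonneg (by linarith [add_one_le_exp x]), abs_of_nonneg hx₀] at h

lemma two_mul_mul_le_one {L s : ℝ} (hL : 0 ≤ L) (hs : s ≤ 1 / (2 * L)) : 2 * (L * s) ≤ 1 := by
  rcases hL.eq_or_lt with rfl | hL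
  · simp
  · calc 2 * (L * s) ≤ 2 * (L * (1 / (2 * L))) := by gcongr
      _ = 1 := by field_simp

/-- One-layer perturbation error: perturbing the hidden state `h ↦ h'` and the relative
positional encoding `p ↦ p'` changes the output of one attention layer by at most
`4·L_v·(L_logit·‖h‖_∞ + 1)·(2·sup_x ‖h(x) − h'(x)‖ + sup_{x,y} ‖p(x,y) − p'(x,y)‖)`,
provided the total perturbation is at most `1/(2·L_logit)`. -/
theorem stmt5
    {χ : Type*} [MeasurableSpace χ]
    (μ : Measure χ) [IsProbabilityMeasure μ]
    (dh dp : ℕ)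
    (logit : EuclideanSpace ℝ (Fin dh) → EuclideanSpace ℝ (Fin dh) →
      EuclideanSpace ℝ (Fin dp) → ℝ)
    (v : EuclideanSpace ℝ (Fin dh) → EuclideanSpace ℝ (Fin dh))
    (Llogit Lv : ℝ) (hLlogit : 0 ≤ Llogit) (hLv : 0 ≤ Lv)
    (hlogit : ∀ a b c a' b' c', |logit a b c - logit a' b' c'| ≤
      Llogit * (‖a - a'‖ + ‖b - b'‖ + ‖c - c'‖))
    (hv : ∀ a b, ‖v a - v b‖ ≤ Lv * ‖a - b‖) (hv0 : v 0 = 0)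
    (h h' : χ → EuclideanSpace ℝ (Fin dh))
    (p p' : χ → χ → EuclideanSpace ℝ (Fin dp))
    (hhmeas : Measurable h) (hh'meas : Measurable h')
    (hhbdd : ∃ M : ℝ, ∀ x, ‖h x‖ ≤ M) (hh'bdd : ∃ M : ℝ, ∀ x, ‖h' x‖ ≤ M)
    (hpmeas : Measurable fun q : χ × χ => p q.1 q.2)
    (hp'meas : Measurable fun q : χ × χ => p' q.1 q.2)
    (hpbdd : ∃ M : ℝ, ∀ x y, ‖p x y‖ ≤ M) (hp'bdd : ∃ M : ℝ, ∀ x y, ‖p' x y‖ ≤ M)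
    (hsmall : 2 * (⨆ x, ‖h x - h' x‖) + (⨆ q : χ × χ, ‖p q.1 q.2 - p' q.1 q.2‖) ≤
      1 / (2 * Llogit)) :
    ∀ x : χ,
      ‖(∫ y, (Real.exp (logit (h' x) (h' y) (p' x y)) /
            ∫ z, Real.exp (logit (h' x) (h' z) (p' x z)) ∂μ) • v (h' y) ∂μ) -
        (∫ y, (Real.exp (logit (h x) (h y) (p x y)) /
            ∫ z, Real.exp (logit (h x) (h z) (p x z)) ∂μ) • v (h y) ∂μ)‖ ≤
      4 * Lv * (Llogit * (⨆ x', ‖h x'‖) + 1) *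
        (2 * (⨆ x', ‖h x' - h' x'‖) + ⨆ q : χ × χ, ‖p q.1 q.2 - p' q.1 q.2‖) := by
  intro x
  set δh := ⨆ x', ‖h x' - h' x'‖
  set δp := ⨆ q : χ × χ, ‖p q.1 q.2 - p' q.1 q.2‖
  set H := ⨆ x', ‖h x'‖
  have hδh₀ : 0 ≤ δh := Real.iSup_nonneg fun _ => norm_nonneg _
  have hδp₀ : 0 ≤ δp := Real.iSup_nonneg fun _ => norm_nonneg _
  have hH₀ : 0 ≤ H := Real.iSup_nonneg fun _ => norm_nonneg _
  set t := Llogit * (2 * δh + δp)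
  have ht : 2 * t ≤ 1 := two_mul_mul_le_one hLlogit hsmall
  calc _ ≤ Lv * δh + (exp (2 * t) - 1) * (Lv * H) :=
        norm_integral_attention_sub_le hLlogit hLv hlogit hv hv0 hhmeas hh'meas hpmeas hp'meas
          hhbdd hh'bdd hpbdd hp'bdd (norm_sub_le_iSup_norm_sub hhbdd hh'bdd)
          (fun y z => norm_sub_le_iSup_norm_sub (f := fun q : χ × χ => p q.1 q.2)
            (g := fun q => p' q.1 q.2) (hpbdd.imp fun _ hM q => hM q.1 q.2)
            (hp'bdd.imp fun _ hM q => hM q.1 q.2) (y, z))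
          (fun y => le_ciSup (f := fun x' => ‖h x'‖)
            (hhbdd.imp fun _ hM => Set.forall_mem_range.2 hM) y) x
    _ ≤ Lv * δh + 4 * t * (Lv * H) := by
        gcongr
        linarith [exp_sub_one_le_two_mul (by positivity : 0 ≤ 2 * t) ht]
    _ ≤ 4 * Lv * (Llogit * H + 1) * (2 * δh + δp) := by
        nlinarith [mul_nonneg hLv hδh₀, mul_nonneg hLv hδp₀]
end
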